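/- arXiv:2003.14182 — 3 statements merged into one kernel-verified Lean document; each statement's English description precedes it below -/
import Mathlib

section
/- Let K and E be full-dimensional convex bodies in ℝⁿ and let −r(K;E) < λ₁ < ∞. If K_{λ₁} is homothetic to a tangential body of E, then for every λ ∈ (−r(K;E), λ₁] the parallel body K_λ is homothetic to K_{λ₁}. -/
open scoped Pointwise RealInnerProductSpace
open Metric MeasureTheory

/-- Euclidean n-space. -/
abbrev Eucl (n : ℕ) := EuclideanSpace ℝ (Fin n)

/-- Support function h_K(u) = sup {⟨x,u⟩ : x ∈ K}. -/
noncomputable def suppFn {n : ℕ} (K : Set (Eucl n)) (u : Eucl n) : ℝ :=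
  sSup ((fun x => (inner ℝ x u : ℝ)) '' K)

/-- Closed halfspace H⁻_{u,α} = {x : ⟨x,u⟩ ≤ α}. -/
def halfspace {n : ℕ} (u : Eucl n) (α : ℝ) : Set (Eucl n) := {x | (inner ℝ x u : ℝ) ≤ α}

/-- Minkowski difference M ∼ N = {x : N + x ⊆ M}. -/
def mdiff {n : ℕ} (M N : Set (Eucl n)) : Set (Eucl n) := {x | N + {x} ⊆ M}

/-- Relative inradius r(K;E) = sup {r ≥ 0 : ∃ x, x + r•E ⊆ K}. -/
noncomputable def inradius {n : ℕ} (K E : Set (Eucl n)) : ℝ :=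
  sSup {r : ℝ | 0 ≤ r ∧ ∃ x : Eucl n, r • E + {x} ⊆ K}

/-- Inner (λ ≤ 0) and outer (λ ≥ 0) parallel bodies K_λ of K relative to E. -/
noncomputable def parallelBody {n : ℕ} (K E : Set (Eucl n)) (l : ℝ) : Set (Eucl n) :=
  if l ≤ 0 then mdiff K (|l| • E) else K + l • E

/-- A is homothetic to B: A = α•B + x for some α > 0 and x. -/
def Homothetic {n : ℕ} (A B : Set (Eucl n)) : Prop :=
  ∃ α : ℝ, 0 < α ∧ ∃ x : Eucl n, A = α • B + {x}

/-- The hyperplane {x : ⟨x,u⟩ = α} supports M: it meets M and M lies in one of the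
two closed halfspaces bounded by it. -/
def SupportsHyp {n : ℕ} (u : Eucl n) (α : ℝ) (M : Set (Eucl n)) : Prop :=
  (M ∩ {x | (inner ℝ x u : ℝ) = α}).Nonempty ∧
    (M ⊆ {x | (inner ℝ x u : ℝ) ≤ α} ∨ M ⊆ {x | α ≤ (inner ℝ x u : ℝ)})

/-- K is a tangential body of E: E ⊆ K and through every boundary point of K there is a
supporting hyperplane of K that also supports E. -/
def IsTangentialBody {n : ℕ} (K E : Set (Eucl n)) : Prop :=
  E ⊆ K ∧ ∀ p ∈ frontier K, ∃ u : Eucl n, u ≠ 0 ∧ ∃ α : ℝ,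
    (inner ℝ p u : ℝ) = α ∧ SupportsHyp u α K ∧ SupportsHyp u α E

/-- Ω determines K: K is the intersection of the halfspaces with normals in Ω at heights h_K. -/
def Determines {n : ℕ} (Ω K : Set (Eucl n)) : Prop :=
  K = ⋂ u ∈ Ω, halfspace u (suppFn K u)

/-- The Wulff shape K(Ω,λ) = ⋂_{u ∈ Ω} H⁻_{u, h_K(u) + λ h_E(u)}. -/
noncomputable def wulff {n : ℕ} (K E Ω : Set (Eucl n)) (l : ℝ) : Set (Eucl n) :=
  ⋂ u ∈ Ω, halfspace u (suppFn K u + l * suppFn E u)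

/-- E^Ω = ⋂_{u ∈ Ω} H⁻_{u, h_E(u)}. -/
noncomputable def tangBody {n : ℕ} (E Ω : Set (Eucl n)) : Set (Eucl n) :=
  ⋂ u ∈ Ω, halfspace u (suppFn E u)

/-!
For `l ≤ l₁` the parallel bodies satisfy `K_l = K_{l₁} ∼ (l₁ - l)E`: this rests on the
cancellation law `(A + C) ∼ C = A` for convex closed `A` and compact `C`, proved by separating a
point from `A`. Hence if `K_{l₁} = αT + x`, then `K_l = α(T ∼ νE) + x` with `ν = (l₁ - l)/α`.
For a tangential body, every point outside `T` is cut off by a hyperplane supporting both `T` and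
`E`, which gives `T ∼ νE = (1 - ν)T` for `0 ≤ ν < 1`. Finally `ν < 1`: letting `ν → 1` in that
identity shows `r(T;E) ≤ 1`, whence `r(K;E) ≤ α - l₁`.
-/

open Filter Topology

section Minkowski

variable {n : ℕ}

lemma mem_mdiff {M N : Set (Eucl n)} {x : Eucl n} : x ∈ mdiff M N ↔ ∀ y ∈ N, y + x ∈ M :=
  Set.add_subset_iff.trans <| by simp only [Set.mem_singleton_iff, forall_eq]

lemma mdiff_univ (N : Set (Eucl n)) : mdiff Set.univ N = Set.univ :=
  Set.eq_univ_of_forall fun _ => mem_mdiff.2 fun _ _ => trivial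

lemma mdiff_mdiff (K A B : Set (Eucl n)) : mdiff (mdiff K A) B = mdiff K (A + B) := by
  ext x
  simp only [mem_mdiff, ← Set.image2_add, Set.forall_mem_image2, add_assoc]
  exact forall₂_comm

lemma mdiff_add_singleton (A N : Set (Eucl n)) (x : Eucl n) :
    mdiff (A + {x}) N = mdiff A N + {x} := by
  ext z
  simp [mem_mdiff, Set.add_singleton, Set.image_add_right, add_assoc]

lemma mdiff_smul_smul (A N : Set (Eucl n)) {α : ℝ} (hα : α ≠ 0) :
    mdiff (α • A) (α • N) = α • mdiff A N := by
  ext z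
  simp only [mem_mdiff, Set.mem_smul_set_iff_inv_smul_mem₀ hα, smul_add]
  refine ⟨fun h y hy => ?_, fun h y hy => h _ hy⟩
  simpa [inv_smul_smul₀ hα] using h (α • y) (by rwa [inv_smul_smul₀ hα])

lemma mdiff_add_cancel {A C : Set (Eucl n)} (hAv : Convex ℝ A) (hAc : IsClosed A)
    (hCc : IsCompact C) (hCne : C.Nonempty) : mdiff (A + C) C = A := by
  refine Set.Subset.antisymm (fun x hx => ?_) fun x hx =>
    mem_mdiff.2 fun y hy => add_comm x y ▸ Set.add_mem_add hx hy
  by_contra hxA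
  obtain ⟨f, s, hfA, hfx⟩ := geometric_hahn_banach_closed_point hAv hAc hxA
  obtain ⟨c, hc, hcmax⟩ := hCc.exists_isMaxOn hCne f.continuous.continuousOn
  obtain ⟨a, ha, c', hc', hsum⟩ := mem_mdiff.1 hx c hc
  have hf := congrArg f hsum
  rw [map_add, map_add] at hf
  linarith [hfA a ha, isMaxOn_iff.1 hcmax c' hc']

lemma parallelBody_eq_mdiff {K E : Set (Eucl n)} (hKc : IsCompact K) (hKv : Convex ℝ K)
    (hEc : IsCompact E) (hEv : Convex ℝ E) (hEne : E.Nonempty) {l l₁ : ℝ} (hl : l ≤ l₁) :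
    parallelBody K E l = mdiff (parallelBody K E l₁) ((l₁ - l) • E) := by
  have hsplit {a b c : ℝ} (ha : 0 ≤ a) (hb : 0 ≤ b) (h : a + b = c) : c • E = a • E + b • E :=
    h ▸ hEv.add_smul ha hb
  have hcancel {A : Set (Eucl n)} (hAv : Convex ℝ A) (hAc : IsCompact A) {a : ℝ} :
      mdiff (A + a • E) (a • E) = A :=
    mdiff_add_cancel hAv hAc.isClosed (hEc.smul a) (hEne.smul_set)
  unfold parallelBody
  split_ifs with h h₁ h₁
  · rw [mdiff_mdiff, ← hsplit (abs_nonneg l₁) (sub_nonneg.2 hl)]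
    rw [abs_of_nonpos h₁, abs_of_nonpos h]; ring
  · rw [hsplit (c := l₁ - l) (le_of_not_ge h₁) (abs_nonneg l) (by rw [abs_of_nonpos h]; ring),
      ← mdiff_mdiff, hcancel hKv hKc]
  · linarith
  · rw [hsplit (c := l₁) (le_of_not_ge h) (sub_nonneg.2 hl) (add_sub_cancel l l₁), ← add_assoc,
      hcancel (hKv.add (hEv.smul l)) (hKc.add (hEc.smul l))]

end Minkowski

lemma IsPreconnected.inter_frontier_nonempty {X : Type*} [TopologicalSpace X] {s t : Set X}
    (hs : IsPreconnected s) (hin : (s ∩ interior t).Nonempty) (hout : (s \ closure t).Nonempty) :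
    (s ∩ frontier t).Nonempty := by
  by_contra h
  have hsub : s ⊆ interior t ∪ (closure t)ᶜ := fun x hx => by
    by_cases hc : x ∈ closure t
    · exact Or.inl (by_contra fun hi => h ⟨x, hx, hc, hi⟩)
    · exact Or.inr hc
  obtain ⟨x, hxs, hxt⟩ := hout
  exact hxt <| interior_subset_closure <| hs.subset_left_of_subset_union isOpen_interior
    isClosed_closure.isOpen_compl (disjoint_compl_right.mono_left interior_subset_closure)
    hsub hin hxs

lemma inner_lt_of_mem_interior {F : Type*} [NormedAddCommGroup F] [InnerProductSpace ℝ F]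
    {s : Set F} {q u : F} {c : ℝ} (hq : q ∈ interior s) (hu : u ≠ 0)
    (hs : ∀ w ∈ s, ⟪w, u⟫ ≤ c) : ⟪q, u⟫ < c := by
  have hpath : Tendsto (fun ε : ℝ => q + ε • u) (𝓝[>] 0) (𝓝 q) := by
    have hcont : Continuous fun ε : ℝ => q + ε • u := by fun_prop
    simpa using (hcont.tendsto 0).mono_left nhdsWithin_le_nhds
  obtain ⟨ε, hεs, hε⟩ :=
    ((hpath.eventually (mem_interior_iff_mem_nhds.1 hq)).and self_mem_nhdsWithin).exists
  have hstep := hs _ hεs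
  rw [inner_add_left, real_inner_smul_left, real_inner_self_eq_norm_sq] at hstep
  have hpos : 0 < ε * ‖u‖ ^ 2 := mul_pos hε (pow_pos (norm_pos_iff.2 hu) 2)
  linarith

lemma nontrivial_of_interior_nonempty {F : Type*} [NormedAddCommGroup F] [NormedSpace ℝ F]
    [Nontrivial F] {s : Set F} (h : (interior s).Nonempty) : s.Nontrivial := by
  obtain ⟨c, hc⟩ := h
  refine (Set.eq_singleton_or_nontrivial (interior_subset hc)).resolve_left fun hs => ?_
  rw [hs, interior_singleton] at hc
  exact hc

namespace IsTangentialBody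

variable {n : ℕ} {T E : Set (Eucl n)}

lemma exists_separating (hT : IsTangentialBody T E) (hTc : IsClosed T)
    (hTi : (interior T).Nonempty) {z : Eucl n} (hz : z ∉ T) :
    ∃ u : Eucl n, ∃ e ∈ E, (∀ w ∈ T, ⟪w, u⟫ ≤ ⟪e, u⟫) ∧ ⟪e, u⟫ < ⟪z, u⟫ := by
  obtain ⟨q, hq⟩ := hTi
  obtain ⟨p, hpseg, hpT⟩ := (convex_segment q z).isPreconnected.inter_frontier_nonempty
    ⟨q, left_mem_segment ℝ q z, hq⟩ ⟨z, right_mem_segment ℝ q z, by rwa [hTc.closure_eq]⟩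
  obtain ⟨u₀, hu₀, α, hpα, ⟨-, hside⟩, ⟨⟨e, heE, heα⟩, -⟩⟩ := hT.2 p hpT
  have hep₀ : ⟪e, u₀⟫ = ⟪p, u₀⟫ := heα.trans hpα.symm
  obtain ⟨u, hu, hep, hTp⟩ : ∃ u : Eucl n, u ≠ 0 ∧ ⟪e, u⟫ = ⟪p, u⟫ ∧
      ∀ w ∈ T, ⟪w, u⟫ ≤ ⟪p, u⟫ := by
    rcases hside with hle | hge
    · exact ⟨u₀, hu₀, hep₀, fun w hw => hpα ▸ hle hw⟩
    · refine ⟨-u₀, neg_ne_zero.2 hu₀, by rw [inner_neg_right, inner_neg_right, hep₀],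
        fun w hw => ?_⟩
      simp only [inner_neg_right, neg_le_neg_iff]
      exact hpα ▸ hge hw
  refine ⟨u, e, heE, fun w hw => hep ▸ hTp w hw, hep ▸ ?_⟩
  have hqp : ⟪q, u⟫ < ⟪p, u⟫ := inner_lt_of_mem_interior hq hu hTp
  obtain ⟨a, b, ha, hb, hab, rfl⟩ := hpseg
  have ha' : 0 < a := by
    refine ha.lt_of_ne fun ha0 => hz ?_
    rw [← ha0, zero_add] at hab
    simpa [← ha0, hab] using hTc.frontier_subset hpT
  have hp : ⟪a • q + b • z, u⟫ = a * ⟪q, u⟫ + b * ⟪z, u⟫ := by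
    rw [inner_add_left, real_inner_smul_left, real_inner_smul_left]
  by_contra! hzp
  rw [hp] at hqp hzp
  have hsum : (a + b) * (a * ⟪q, u⟫ + b * ⟪z, u⟫) = a * ⟪q, u⟫ + b * ⟪z, u⟫ := by
    rw [hab, one_mul]
  linarith [mul_lt_mul_of_pos_left hqp ha', mul_le_mul_of_nonneg_left hzp hb]

lemma mdiff_smul_eq (hT : IsTangentialBody T E) (hTc : IsClosed T) (hTv : Convex ℝ T)
    (hTi : (interior T).Nonempty) {ν : ℝ} (h0 : 0 ≤ ν) (h1 : ν < 1) :
    mdiff T (ν • E) = (1 - ν) • T := by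
  have hν : 0 < 1 - ν := sub_pos.2 h1
  ext x
  constructor
  · intro hx
    rw [Set.mem_smul_set_iff_inv_smul_mem₀ hν.ne']
    by_contra hxT
    obtain ⟨u, e, heE, hTe, hex⟩ := hT.exists_separating hTc hTi hxT
    have hin := hTe _ (mem_mdiff.1 hx _ (Set.smul_mem_smul_set heE))
    rw [inner_add_left, real_inner_smul_left] at hin
    rw [real_inner_smul_left, lt_inv_mul_iff₀ hν] at hex
    linarith
  · rintro ⟨w, hwT, rfl⟩
    refine mem_mdiff.2 fun y hy => ?_
    obtain ⟨e, heE, rfl⟩ := hy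
    exact hTv (hT.1 heE) hwT h0 hν.le (by ring)

lemma le_one_of_mem_mdiff (hT : IsTangentialBody T E) (hTc : IsCompact T) (hTv : Convex ℝ T)
    (hTi : (interior T).Nonempty) (hEv : Convex ℝ E) (hE : E.Nontrivial) {t : ℝ} {y : Eucl n}
    (hy : y ∈ mdiff T (t • E)) : t ≤ 1 := by
  by_contra! ht
  obtain ⟨e₁, he₁, e₂, he₂, hne⟩ := hE
  have hd : 0 < ‖e₁ - e₂‖ := norm_pos_iff.2 (sub_ne_zero.2 hne)
  -- `T ∼ tE = (1 - ν)T ∼ (t - ν)E`, so a translate of `(t - ν)E` fits in `(1 - ν)T`; let `ν → 1`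
  have key : ∀ ν ∈ Set.Ico (0 : ℝ) 1,
      (t - ν) * ‖e₁ - e₂‖ ≤ (1 - ν) * Metric.diam T := by
    rintro ν ⟨h0, h1⟩
    have hy' : y ∈ mdiff ((1 - ν) • T) ((t - ν) • E) := by
      rwa [← hT.mdiff_smul_eq hTc.isClosed hTv hTi h0 h1, mdiff_mdiff,
        ← hEv.add_smul h0 (by linarith), add_sub_cancel]
    obtain ⟨p₁, hp₁, hp₁e⟩ := mem_mdiff.1 hy' _ (Set.smul_mem_smul_set he₁)
    obtain ⟨p₂, hp₂, hp₂e⟩ := mem_mdiff.1 hy' _ (Set.smul_mem_smul_set he₂)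
    have hdiff : (t - ν) • (e₁ - e₂) = (1 - ν) • (p₁ - p₂) := by
      rw [smul_sub, smul_sub, ← add_sub_add_right_eq_sub _ _ y, ← hp₁e, ← hp₂e]
    calc (t - ν) * ‖e₁ - e₂‖ = ‖(t - ν) • (e₁ - e₂)‖ := by
          rw [norm_smul, Real.norm_of_nonneg (by linarith)]
      _ = (1 - ν) * dist p₁ p₂ := by
          rw [hdiff, norm_smul, Real.norm_of_nonneg (by linarith), dist_eq_norm]
      _ ≤ (1 - ν) * Metric.diam T := by
          gcongr
          exact Metric.dist_le_diam_of_mem hTc.isBounded hp₁ hp₂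
  have hlhs : Continuous fun ν : ℝ => (t - ν) * ‖e₁ - e₂‖ := by fun_prop
  have hrhs : Continuous fun ν : ℝ => (1 - ν) * Metric.diam T := by fun_prop
  have hlim : (t - 1) * ‖e₁ - e₂‖ ≤ (1 - 1) * Metric.diam T :=
    le_of_tendsto_of_tendsto ((hlhs.tendsto 1).mono_left nhdsWithin_le_nhds)
      ((hrhs.tendsto 1).mono_left nhdsWithin_le_nhds)
      (eventually_of_mem (Ico_mem_nhdsLT one_pos) key)
  rw [sub_self, zero_mul] at hlim
  linarith [mul_pos (sub_pos.2 ht) hd]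

end IsTangentialBody

section ParallelBody

variable {n : ℕ} {K E T : Set (Eucl n)} {l₁ α : ℝ} {x : Eucl n}

lemma parallelBody_eq_smul_mdiff_add_singleton (hKc : IsCompact K) (hKv : Convex ℝ K)
    (hEc : IsCompact E) (hEv : Convex ℝ E) (hEne : E.Nonempty) (hα : 0 < α)
    (hK₁ : parallelBody K E l₁ = α • T + {x}) {l : ℝ} (hl : l ≤ l₁) :
    parallelBody K E l = α • mdiff T (((l₁ - l) / α) • E) + {x} := by
  rw [parallelBody_eq_mdiff hKc hKv hEc hEv hEne hl, hK₁, mdiff_add_singleton,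
    ← mdiff_smul_smul _ _ hα.ne', smul_smul, mul_div_cancel₀ _ hα.ne']

lemma inradius_le_of_parallelBody_eq (hKc : IsCompact K) (hKv : Convex ℝ K) (hKne : K.Nonempty)
    (hEc : IsCompact E) (hEv : Convex ℝ E) (hE : E.Nontrivial)
    (hTc : IsCompact T) (hTv : Convex ℝ T) (hTi : (interior T).Nonempty)
    (hT : IsTangentialBody T E) (hα : 0 < α) (hK₁ : parallelBody K E l₁ = α • T + {x}) :
    inradius K E ≤ α - l₁ := by
  obtain ⟨k, hk⟩ := hKne
  refine csSup_le ⟨0, le_rfl, k, by simpa [Set.zero_smul_set hE.nonempty] using hk⟩ ?_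
  rintro s ⟨hs, y, hy⟩
  by_contra! hlt
  have hy' : y ∈ parallelBody K E (-s) := by
    rwa [parallelBody, if_pos (by linarith), abs_neg, abs_of_nonneg hs]
  rw [parallelBody_eq_smul_mdiff_add_singleton hKc hKv hEc hEv hE.nonempty hα hK₁
    (by linarith)] at hy'
  obtain ⟨z, hz⟩ := Set.smul_set_nonempty.1 (Set.Nonempty.of_add_left ⟨y, hy'⟩)
  have hle := hT.le_one_of_mem_mdiff hTc hTv hTi hEv hE hz
  rw [div_le_one hα] at hle
  linarith

end ParallelBody

lemma homothetic_smul_smul_add_singleton {n : ℕ} (T : Set (Eucl n)) {α c : ℝ} (hc : 0 < c)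
    (x : Eucl n) : Homothetic (α • (c • T) + {x}) (α • T + {x}) := by
  refine ⟨c, hc, (1 - c) • x, ?_⟩
  rw [smul_add, smul_smul, mul_comm, ← smul_smul, Set.smul_set_singleton, add_assoc,
    Set.singleton_add_singleton]
  congr
  module

theorem statement7_general {n : ℕ} (K E : Set (Eucl n))
    (hKcomp : IsCompact K) (hKconv : Convex ℝ K) (hKint : (interior K).Nonempty)
    (hEcomp : IsCompact E) (hEconv : Convex ℝ E) (hEint : (interior E).Nonempty)
    (l₁ : ℝ)
    (hT : ∃ T : Set (Eucl n), IsCompact T ∧ Convex ℝ T ∧ (interior T).Nonempty ∧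
      IsTangentialBody T E ∧ Homothetic (parallelBody K E l₁) T) :
    ∀ l : ℝ, -(inradius K E) < l → l ≤ l₁ →
      Homothetic (parallelBody K E l) (parallelBody K E l₁) := by
  intro l hl hle
  obtain ⟨T, hTc, hTv, hTi, hTan, α, hα, x, hK₁⟩ := hT
  have hKl := parallelBody_eq_smul_mdiff_add_singleton hKcomp hKconv hEcomp hEconv
    (hEint.mono interior_subset) hα hK₁ hle
  rcases subsingleton_or_nontrivial (Eucl n) with _ | _
  · have hTne : T.Nonempty := hTi.mono interior_subset
    rw [hTne.eq_univ, mdiff_univ, ← hTne.eq_univ, ← hK₁] at hKl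
    exact ⟨1, one_pos, 0, by rw [hKl, one_smul, Set.add_singleton]; simp⟩
  · have hE := nontrivial_of_interior_nonempty hEint
    have hr := inradius_le_of_parallelBody_eq hKcomp hKconv (hKint.mono interior_subset) hEcomp
      hEconv hE hTc hTv hTi hTan hα hK₁
    have hν : (l₁ - l) / α < 1 := (div_lt_one hα).2 (by linarith)
    rw [hKl, hTan.mdiff_smul_eq hTc.isClosed hTv hTi (div_nonneg (by linarith) hα.le) hν, hK₁]
    exact homothetic_smul_smul_add_singleton T (sub_pos.2 hν) x

/-- If K_{λ₁} is homothetic to a tangential body of E, then for every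
λ ∈ (−r(K;E), λ₁] the body K_λ is homothetic to K_{λ₁}. -/
theorem statement7 {n : ℕ} (K E : Set (Eucl n))
    (hKcomp : IsCompact K) (hKconv : Convex ℝ K) (hKint : (interior K).Nonempty)
    (hEcomp : IsCompact E) (hEconv : Convex ℝ E) (hEint : (interior E).Nonempty)
    (l₁ : ℝ) (hl₁ : -(inradius K E) < l₁)
    (hT : ∃ T : Set (Eucl n), IsCompact T ∧ Convex ℝ T ∧ (interior T).Nonempty ∧
      IsTangentialBody T E ∧ Homothetic (parallelBody K E l₁) T) :
    ∀ l : ℝ, -(inradius K E) < l → l ≤ l₁ →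
      Homothetic (parallelBody K E l) (parallelBody K E l₁) :=
  statement7_general K E hKcomp hKconv hKint hEcomp hEconv hEint l₁ hT
end

section
/- Let K and E be full-dimensional convex bodies in ℝⁿ and let Ω ⊆ S^{n−1} determine K. If Λ > −r(K;E), then for all λ ∈ (−r(K;E), Λ], the Wulff shape K(Ω,λ) equals the inner parallel body of K(Ω,Λ) relative to E at distance Λ−λ, i.e. K(Ω,λ) = K(Ω,Λ) ∼ (Λ−λ)·E. -/
open scoped Pointwise RealInnerProductSpace
open Metric MeasureTheory

/-! Minkowski difference by a nonempty compact set commutes with intersections and moves each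
halfspace in by the support function, `H⁻_{u,β} ∼ N = H⁻_{u, β - h_N(u)}`. Since
`h_{(Λ-λ)E} = (Λ-λ) h_E`, this turns the heights `h_K + Λ h_E` of `K(Ω,Λ)` into the heights
`h_K + λ h_E` of `K(Ω,λ)`. -/

theorem mdiff_biInter {n : ℕ} {ι : Type*} (s : Set ι) (A : ι → Set (Eucl n))
    (N : Set (Eucl n)) : mdiff (⋂ i ∈ s, A i) N = ⋂ i ∈ s, mdiff (A i) N := by
  ext x
  simp only [mdiff, Set.mem_ofPred_eq, Set.mem_iInter, Set.subset_iInter_iff]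

theorem suppFn_smul_of_nonneg {n : ℕ} {t : ℝ} (ht : 0 ≤ t) (E : Set (Eucl n)) (u : Eucl n) :
    suppFn (t • E) u = t * suppFn E u := by
  have himage : (fun x => ⟪x, u⟫) '' (t • E) = t • (fun x => ⟪x, u⟫) '' E := by
    simp only [← Set.image_smul, Set.image_image, real_inner_smul_left, smul_eq_mul]
  rw [suppFn, himage, Real.sSup_smul_of_nonneg ht, smul_eq_mul, suppFn]

theorem mdiff_halfspace {n : ℕ} {N : Set (Eucl n)} (hN : IsCompact N) (hne : N.Nonempty)
    (u : Eucl n) (β : ℝ) : mdiff (halfspace u β) N = halfspace u (β - suppFn N u) := by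
  have hbdd : BddAbove ((fun y => ⟪y, u⟫) '' N) :=
    (hN.image (continuous_id.inner continuous_const)).bddAbove
  ext x
  calc x ∈ mdiff (halfspace u β) N ↔ ∀ y ∈ N, ⟪y, u⟫ ≤ β - ⟪x, u⟫ := by
        simp only [mdiff, halfspace, Set.add_singleton, Set.image_subset_iff]
        simp only [Set.preimage_ofPred_eq, inner_add_left, Set.subset_def, Set.mem_ofPred_eq,
          le_sub_iff_add_le]
    _ ↔ x ∈ halfspace u (β - suppFn N u) := by
        rw [halfspace, Set.mem_ofPred, suppFn, le_sub_comm,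
          csSup_le_iff hbdd (hne.image _), Set.forall_mem_image]

theorem statement13_general {n : ℕ} (K E : Set (Eucl n))
    (hEcomp : IsCompact E) (hEint : (interior E).Nonempty)
    (Ω : Set (Eucl n)) (Λ : ℝ) (l : ℝ) (hl₁ : l ≤ Λ) :
    wulff K E Ω l = mdiff (wulff K E Ω Λ) ((Λ - l) • E) := by
  have ht : 0 ≤ Λ - l := sub_nonneg.mpr hl₁
  rw [wulff, wulff, mdiff_biInter]
  refine Set.iInter₂_congr fun u _ => ?_
  rw [mdiff_halfspace (hEcomp.smul (Λ - l)) (hEint.mono interior_subset).smul_set,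
    suppFn_smul_of_nonneg ht]
  congr 1
  ring

/-- For Λ > −r(K;E) and λ ∈ (−r(K;E), Λ],
K(Ω,λ) = K(Ω,Λ) ∼ (Λ−λ)•E. -/
theorem statement13 {n : ℕ} (K E : Set (Eucl n))
    (hKcomp : IsCompact K) (hKconv : Convex ℝ K) (hKint : (interior K).Nonempty)
    (hEcomp : IsCompact E) (hEconv : Convex ℝ E) (hEint : (interior E).Nonempty)
    (Ω : Set (Eucl n)) (hΩsph : Ω ⊆ sphere (0 : Eucl n) 1) (hΩdet : Determines Ω K)
    (Λ : ℝ) (hΛ : -(inradius K E) < Λ)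
    (l : ℝ) (hl₀ : -(inradius K E) < l) (hl₁ : l ≤ Λ) :
    wulff K E Ω l = mdiff (wulff K E Ω Λ) ((Λ - l) • E) :=
  statement13_general K E hEcomp hEint Ω Λ l hl₁
end

section
/- Let K and E be full-dimensional convex bodies in ℝⁿ, let Ω₁ ⊆ Ω₂ ⊆ S^{n−1} both determine K, and let λ > 0. Then K(Ω₁,λ) and K(Ω₂,λ) are both tangential bodies of the outer parallel body K + λ·E, and K(Ω₁,λ) is a tangential body of K(Ω₂,λ). -/
open scoped Pointwise RealInnerProductSpace
open Metric MeasureTheory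

/-!
Since `h_{K + λE} = h_K + λ h_E` for `λ ≥ 0`, the Wulff shape `K(Ω,λ)` is the intersection `M^Ω`
of the supporting halfspaces of `M = K + λE` with normals in `Ω`. For every compact `M` and
`Ω ⊆ S^{n-1}`, `M^Ω` is a tangential body of `M`: the support function `h_M` is continuous, so if a
point `p` of `M^Ω` satisfied `⟨p,a⟩ < h_M(a)` for all `a` in the compact set `closure Ω`, the gap
would be bounded below and a ball around `p` would lie in `M^Ω`. Hence a boundary point `p` lies on
a hyperplane `⟨x,a⟩ = h_M(a)` with `a ∈ closure Ω`, which supports both `M` and `M^Ω`. Finally, a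
tangential body of `M` is also one of every body between `M` and itself, and
`K + λE ⊆ K(Ω₂,λ) ⊆ K(Ω₁,λ)`.
-/

open Set

section SupportFunction

variable {n : ℕ} {M : Set (Eucl n)}

theorem inner_le_suppFn (hM : IsCompact M) {x : Eucl n} (hx : x ∈ M) (u : Eucl n) :
    ⟪x, u⟫ ≤ suppFn M u :=
  le_csSup (hM.image (by fun_prop)).bddAbove ⟨x, hx, rfl⟩

theorem exists_inner_eq_suppFn (hM : IsCompact M) (hne : M.Nonempty) (u : Eucl n) :
    ∃ x ∈ M, ⟪x, u⟫ = suppFn M u :=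
  (hM.image (by fun_prop)).sSup_mem (hne.image _)

theorem continuous_suppFn (hM : IsCompact M) : Continuous (suppFn M) :=
  hM.continuous_sSup (f := fun u x => ⟪x, u⟫) (by fun_prop)

theorem supportsHyp_suppFn (hM : IsCompact M) (hne : M.Nonempty) (u : Eucl n) :
    SupportsHyp u (suppFn M u) M :=
  ⟨exists_inner_eq_suppFn hM hne u, Or.inl fun _ hx => inner_le_suppFn hM hx u⟩

theorem suppFn_add_smul {K E : Set (Eucl n)} (hK : IsCompact K) (hKne : K.Nonempty)
    (hE : IsCompact E) (hEne : E.Nonempty) {l : ℝ} (hl : 0 ≤ l) (u : Eucl n) :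
    suppFn (K + l • E) u = suppFn K u + l * suppFn E u := by
  refine IsGreatest.csSup_eq ⟨?_, ?_⟩
  · obtain ⟨x, hx, hxu⟩ := exists_inner_eq_suppFn hK hKne u
    obtain ⟨e, he, heu⟩ := exists_inner_eq_suppFn hE hEne u
    exact ⟨x + l • e, add_mem_add hx (smul_mem_smul_set he),
      by simp only [inner_add_left, real_inner_smul_left, hxu, heu]⟩
  · rintro _ ⟨_, ⟨x, hx, _, ⟨e, he, rfl⟩, rfl⟩, rfl⟩
    dsimp only
    rw [inner_add_left, real_inner_smul_left]
    exact add_le_add (inner_le_suppFn hK hx u)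
      (mul_le_mul_of_nonneg_left (inner_le_suppFn hE he u) hl)

end SupportFunction

theorem wulff_eq_tangBody {n : ℕ} {K E : Set (Eucl n)} (hK : IsCompact K) (hKne : K.Nonempty)
    (hE : IsCompact E) (hEne : E.Nonempty) (Ω : Set (Eucl n)) {l : ℝ} (hl : 0 ≤ l) :
    wulff K E Ω l = tangBody (K + l • E) Ω := by
  simp only [wulff, tangBody, suppFn_add_smul hK hKne hE hEne hl]

theorem IsTangentialBody.of_subset_of_subset {n : ℕ} {T M A : Set (Eucl n)}
    (h : IsTangentialBody T M) (hMA : M ⊆ A) (hAT : A ⊆ T) : IsTangentialBody T A := by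
  refine ⟨hAT, fun p hp => ?_⟩
  obtain ⟨u, hu, α, hpu, hT, ⟨x, hxM, hxu⟩, _⟩ := h.2 p hp
  refine ⟨u, hu, α, hpu, hT, ⟨x, hMA hxM, hxu⟩, ?_⟩
  exact hT.2.imp hAT.trans hAT.trans

section TangBody

variable {n : ℕ} {M Ω : Set (Eucl n)}

theorem subset_tangBody (hM : IsCompact M) (Ω : Set (Eucl n)) : M ⊆ tangBody M Ω :=
  fun _ hx => mem_iInter₂.2 fun u _ => inner_le_suppFn hM hx u

theorem tangBody_anti {Ω₁ Ω₂ : Set (Eucl n)} (h : Ω₁ ⊆ Ω₂) : tangBody M Ω₂ ⊆ tangBody M Ω₁ :=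
  biInter_subset_biInter_left h

theorem isClosed_tangBody : IsClosed (tangBody M Ω) :=
  isClosed_biInter fun _ _ => isClosed_le (by fun_prop) continuous_const

theorem tangBody_subset_halfspace_of_mem_closure (hM : IsCompact M) {a : Eucl n}
    (ha : a ∈ closure Ω) : tangBody M Ω ⊆ halfspace a (suppFn M a) := fun x hx =>
  closure_minimal (fun u hu => mem_iInter₂.1 hx u hu)
    (isClosed_le (by fun_prop) (continuous_suppFn hM)) ha

theorem ball_subset_tangBody (hΩ : Ω ⊆ sphere 0 1) {p : Eucl n} {r : ℝ}
    (h : ∀ u ∈ Ω, ⟪p, u⟫ + r ≤ suppFn M u) : ball p r ⊆ tangBody M Ω := by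
  intro q hq
  refine mem_iInter₂.2 fun u hu => ?_
  have hu1 : ‖u‖ = 1 := by simpa using hΩ hu
  have hqp : ⟪q - p, u⟫ ≤ r := calc
    ⟪q - p, u⟫ ≤ ‖q - p‖ * ‖u‖ := real_inner_le_norm _ _
    _ ≤ r := by rw [hu1, mul_one, ← dist_eq_norm]; exact (mem_ball.1 hq).le
  calc ⟪q, u⟫ = ⟪p, u⟫ + ⟪q - p, u⟫ := by rw [inner_sub_left]; ring
    _ ≤ ⟪p, u⟫ + r := by gcongr
    _ ≤ suppFn M u := h u hu

theorem exists_mem_closure_inner_eq_suppFn_of_mem_frontier (hM : IsCompact M)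
    (hΩ : Ω ⊆ sphere 0 1) {p : Eucl n} (hp : p ∈ frontier (tangBody M Ω)) :
    ∃ a ∈ closure Ω, ⟪p, a⟫ = suppFn M a := by
  by_contra! hne
  have hgap : ∀ a ∈ closure Ω, 0 < suppFn M a - ⟪p, a⟫ := fun a ha =>
    sub_pos.2 <| lt_of_le_of_ne
      (tangBody_subset_halfspace_of_mem_closure hM ha (isClosed_tangBody.frontier_subset hp))
      (hne a ha)
  have hcpt : IsCompact (closure Ω) :=
    (isCompact_sphere 0 1).of_isClosed_subset isClosed_closure
      (closure_minimal hΩ isClosed_sphere)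
  obtain ⟨r, hr, hrgap⟩ := hcpt.exists_forall_le'
    (f := fun a => suppFn M a - ⟪p, a⟫) ((continuous_suppFn hM).sub (by fun_prop)).continuousOn hgap
  have hball : ball p r ⊆ tangBody M Ω := ball_subset_tangBody hΩ fun u hu => by
    linarith [hrgap u (subset_closure hu)]
  exact hp.2 (mem_interior_iff_mem_nhds.2 (Filter.mem_of_superset (ball_mem_nhds p hr) hball))

theorem isTangentialBody_tangBody (hM : IsCompact M) (hne : M.Nonempty)
    (hΩ : Ω ⊆ sphere 0 1) : IsTangentialBody (tangBody M Ω) M := by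
  refine ⟨subset_tangBody hM Ω, fun p hp => ?_⟩
  obtain ⟨a, ha, hpa⟩ := exists_mem_closure_inner_eq_suppFn_of_mem_frontier hM hΩ hp
  have ha0 : a ≠ 0 := by
    rintro rfl
    simpa using closure_minimal hΩ isClosed_sphere ha
  exact ⟨a, ha0, _, hpa,
    ⟨⟨p, isClosed_tangBody.frontier_subset hp, hpa⟩,
      Or.inl (tangBody_subset_halfspace_of_mem_closure hM ha)⟩,
    supportsHyp_suppFn hM hne a⟩

end TangBody

theorem statement17_general {n : ℕ} (K E : Set (Eucl n))
    (hKcomp : IsCompact K) (hKint : (interior K).Nonempty)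
    (hEcomp : IsCompact E) (hEint : (interior E).Nonempty)
    (Ω₁ Ω₂ : Set (Eucl n)) (hΩsub : Ω₁ ⊆ Ω₂) (hΩsph : Ω₂ ⊆ sphere (0 : Eucl n) 1)
    (l : ℝ) (hl : 0 < l) :
    IsTangentialBody (wulff K E Ω₁ l) (K + l • E) ∧
      IsTangentialBody (wulff K E Ω₂ l) (K + l • E) ∧
        IsTangentialBody (wulff K E Ω₁ l) (wulff K E Ω₂ l) := by
  have hKne : K.Nonempty := hKint.mono interior_subset
  have hEne : E.Nonempty := hEint.mono interior_subset
  have hM : IsCompact (K + l • E) := hKcomp.add (hEcomp.smul l)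
  have hMne : (K + l • E).Nonempty := hKne.add hEne.smul_set
  simp only [wulff_eq_tangBody hKcomp hKne hEcomp hEne _ hl.le]
  have h₁ := isTangentialBody_tangBody hM hMne (hΩsub.trans hΩsph)
  have h₂ := isTangentialBody_tangBody hM hMne hΩsph
  exact ⟨h₁, h₂, h₁.of_subset_of_subset h₂.1 (tangBody_anti hΩsub)⟩

/-- For Ω₁ ⊆ Ω₂ both determining K and λ > 0, K(Ω₁,λ) and K(Ω₂,λ)
are tangential bodies of K + λ•E, and K(Ω₁,λ) is a tangential body of K(Ω₂,λ). -/
theorem statement17 {n : ℕ} (K E : Set (Eucl n))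
    (hKcomp : IsCompact K) (hKconv : Convex ℝ K) (hKint : (interior K).Nonempty)
    (hEcomp : IsCompact E) (hEconv : Convex ℝ E) (hEint : (interior E).Nonempty)
    (Ω₁ Ω₂ : Set (Eucl n)) (hΩsub : Ω₁ ⊆ Ω₂) (hΩsph : Ω₂ ⊆ sphere (0 : Eucl n) 1)
    (hΩ₁det : Determines Ω₁ K) (hΩ₂det : Determines Ω₂ K)
    (l : ℝ) (hl : 0 < l) :
    IsTangentialBody (wulff K E Ω₁ l) (K + l • E) ∧
      IsTangentialBody (wulff K E Ω₂ l) (K + l • E) ∧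
        IsTangentialBody (wulff K E Ω₁ l) (wulff K E Ω₂ l) :=
  statement17_general K E hKcomp hKint hEcomp hEint Ω₁ Ω₂ hΩsub hΩsph l hl
end
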